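/- Let T_1, T_2, ... be i.i.d. random variables, each exponentially distributed with rate 1, let c > 0 and x_0 ≥ 0, and define X_n = x_0 + c·∑_{i=1}^n T_i − n for each natural number n. Then for every integer n ≥ 1, the probability that X_k ≤ 0 for some k ∈ {1, ..., n} is at least 1 − ∑_{k=0}^{n−1} (y_n^k / k!)·e^{−y_n}, where y_n = max{(n − x_0)/c, 0}. -/

import Mathlib

/-!
Confirmation within `n` blocks is implied by `X_n ≤ 0`, that is by `T_1 + ⋯ + T_n ≤ (n - x₀)/c`.
The sum of `n` i.i.d. standard exponentials is Erlang distributed: its tail at `y ≥ 0` is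
`∑_{k<n} y^k/k! e^{-y}`. This follows by induction on `n`, splitting off the last summand: by
independence the tail of `T + S` is the `Exp(1)`-average of `t ↦ P(S > y - t)`, which equals `1`
for `t > y` and is given by the induction hypothesis for `t ≤ y`.
-/

open MeasureTheory ProbabilityTheory

/-- The discrete-time skeleton of the Cramér–Lundberg process:
`X_n = x₀ + c·∑_{i=1}^n T_i − n` (the `n` i.i.d. variables are `T 0, …, T (n-1)`). -/
noncomputable def CLskeleton {Ω : Type*} (T : ℕ → Ω → ℝ) (c x₀ : ℝ) (n : ℕ) (ω : Ω) : ℝ :=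
  x₀ + c * ∑ i ∈ Finset.range n, T i ω - n

open Real Set Finset
open scoped ENNReal

lemma expMeasure_Ioi {r : ℝ} (hr : 0 < r) {a : ℝ} (ha : 0 ≤ a) :
    expMeasure r (Ioi a) = ENNReal.ofReal (exp (-(r * a))) := by
  have := isProbabilityMeasure_expMeasure hr
  rw [← compl_Iic, prob_compl_eq_one_sub measurableSet_Iic, ← ofReal_cdf, cdf_expMeasure_eq hr,
    if_pos ha, ← ENNReal.ofReal_one, ← ENNReal.ofReal_sub _ (sub_nonneg.2 ?_), sub_sub_cancel]
  exact exp_le_one_iff.2 (by nlinarith)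

lemma ae_nonneg_expMeasure (r : ℝ) : ∀ᵐ t ∂expMeasure r, 0 ≤ t := by
  rw [ae_iff]
  simp only [not_le]
  change expMeasure r (Iio 0) = 0
  rw [expMeasure, gammaMeasure, withDensity_apply _ measurableSet_Iio]
  exact lintegral_gammaPDF_of_nonpos le_rfl

lemma lintegral_expMeasure_of_eq_one_of_lt {r : ℝ} (hr : 0 < r) {f : ℝ → ℝ≥0∞} {g : ℝ → ℝ}
    {y : ℝ} (hy : 0 ≤ y) (hg : Continuous g) (hg_nonneg : ∀ t ∈ Icc 0 y, 0 ≤ g t)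
    (hfg : ∀ t ∈ Icc 0 y, f t = ENNReal.ofReal (g t)) (hf : ∀ t, y < t → f t = 1) :
    ∫⁻ t, f t ∂expMeasure r =
      ENNReal.ofReal (exp (-(r * y)) + ∫ t in (0 : ℝ)..y, r * exp (-(r * t)) * g t) := by
  have hnonneg : ∀ t ∈ Icc 0 y, 0 ≤ r * exp (-(r * t)) * g t := fun t ht => by
    have := hg_nonneg t ht; positivity
  have hint : ContinuousOn (fun t => r * exp (-(r * t)) * g t) (Icc 0 y) := by fun_prop
  have hpdf : Measurable (gammaPDF 1 r) := (measurable_gammaPDFReal 1 r).ennreal_ofReal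
  have hIcc : ∫⁻ t in Icc 0 y, f t ∂expMeasure r =
      ENNReal.ofReal (∫ t in (0 : ℝ)..y, r * exp (-(r * t)) * g t) := by
    rw [intervalIntegral.integral_of_le hy, ← integral_Icc_eq_integral_Ioc,
      ofReal_integral_eq_lintegral_ofReal (hint.integrableOn_Icc)
        (ae_restrict_of_forall_mem measurableSet_Icc hnonneg),
      setLIntegral_congr_fun measurableSet_Icc hfg, expMeasure, gammaMeasure,
      setLIntegral_withDensity_eq_setLIntegral_mul _ hpdf hg.measurable.ennreal_ofReal
        measurableSet_Icc]
    refine setLIntegral_congr_fun measurableSet_Icc fun t ht => ?_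
    change exponentialPDF r t * ENNReal.ofReal (g t) = _
    rw [exponentialPDF_of_nonneg ht.1, ← ENNReal.ofReal_mul (by positivity)]
  have hIoi : ∫⁻ t in Ioi y, f t ∂expMeasure r = ENNReal.ofReal (exp (-(r * y))) := by
    rw [setLIntegral_congr_fun measurableSet_Ioi hf, setLIntegral_one, expMeasure_Ioi hr hy]
  rw [← Measure.restrict_eq_self_of_ae_mem (s := Ici 0) (ae_nonneg_expMeasure r),
    ← Icc_union_Ioi_eq_Ici hy,
    lintegral_union measurableSet_Ioi ((Iic_disjoint_Ioi le_rfl).mono_left Set.Icc_subset_Iic_self),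
    hIcc, hIoi,
    ENNReal.ofReal_add (by positivity) (intervalIntegral.integral_nonneg hy hnonneg), add_comm]

/-- `erlangTail n y = P(Γ(n, 1) > y)`, the probability that a rate-one Poisson process has fewer
than `n` arrivals in `[0, y]`. -/
noncomputable def erlangTail (n : ℕ) (y : ℝ) : ℝ :=
  ∑ k ∈ range n, y ^ k / k.factorial * exp (-y)

lemma erlangTail_nonneg (n : ℕ) {y : ℝ} (hy : 0 ≤ y) : 0 ≤ erlangTail n y := by
  unfold erlangTail; positivity

lemma erlangTail_zero_right {n : ℕ} (hn : n ≠ 0) : erlangTail n 0 = 1 := by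
  obtain ⟨m, rfl⟩ := Nat.exists_eq_succ_of_ne_zero hn
  simp [erlangTail, sum_range_succ']

@[fun_prop]
lemma continuous_erlangTail (n : ℕ) : Continuous (erlangTail n) := by
  unfold erlangTail; fun_prop

lemma integral_sub_pow_div_factorial (y : ℝ) (k : ℕ) :
    ∫ t in (0 : ℝ)..y, (y - t) ^ k / k.factorial = y ^ (k + 1) / (k + 1).factorial := by
  rw [intervalIntegral.integral_comp_sub_left (fun s : ℝ => s ^ k / k.factorial),
    intervalIntegral.integral_div, integral_pow, Nat.factorial_succ]
  push_cast
  field_simp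
  ring

-- Renewal equation: condition on the first arrival of a rate-one Poisson process.
lemma erlangTail_succ (n : ℕ) (y : ℝ) :
    erlangTail (n + 1) y = exp (-y) + ∫ t in (0 : ℝ)..y, exp (-t) * erlangTail n (y - t) := by
  have hterm : ∀ t, exp (-t) * erlangTail n (y - t) =
      ∑ k ∈ range n, (y - t) ^ k / k.factorial * exp (-y) := by
    intro t
    rw [erlangTail, mul_sum]
    refine sum_congr rfl fun k _ => ?_
    rw [show -y = -t + -(y - t) by ring, exp_add]
    ring
  simp_rw [hterm]
  rw [intervalIntegral.integral_finsetSum fun k _ =>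
    (by fun_prop : Continuous _).intervalIntegrable _ _]
  simp_rw [intervalIntegral.integral_mul_const, integral_sub_pow_div_factorial]
  rw [erlangTail, sum_range_succ']
  simp [add_comm]

lemma CLskeleton_nonpos_iff {Ω : Type*} (T : ℕ → Ω → ℝ) {c : ℝ} (hc : 0 < c) (x₀ : ℝ) (n : ℕ)
    (ω : Ω) : CLskeleton T c x₀ n ω ≤ 0 ↔ ∑ i ∈ range n, T i ω ≤ (n - x₀) / c := by
  rw [CLskeleton, le_div_iff₀ hc]
  constructor <;> intro h <;> linarith

section Erlang

variable {Ω : Type*} [MeasurableSpace Ω] {P : Measure Ω}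

lemma ae_nonneg_of_map_eq_expMeasure {X : Ω → ℝ} (hX : Measurable X) {r : ℝ}
    (hXr : P.map X = expMeasure r) : ∀ᵐ ω ∂P, 0 ≤ X ω := by
  have := ae_nonneg_expMeasure r
  rwa [← hXr, ae_map_iff hX.aemeasurable measurableSet_Ici] at this

variable [IsProbabilityMeasure P] {T : ℕ → Ω → ℝ}

lemma ProbabilityTheory.IndepFun.measure_lt_add {X Y : Ω → ℝ} (hXY : IndepFun X Y P)
    (hX : Measurable X) (hY : Measurable Y) (y : ℝ) :
    P {ω | y < X ω + Y ω} = ∫⁻ t, P {ω | y - t < Y ω} ∂(P.map X) := by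
  have hA : MeasurableSet {p : ℝ × ℝ | y < p.1 + p.2} :=
    measurableSet_lt (by fun_prop) (by fun_prop)
  have := Measure.map_apply (μ := P) (hX.prodMk hY) hA
  rw [(indepFun_iff_map_prod_eq_prod_map_map hX.aemeasurable hY.aemeasurable).mp hXY,
    Measure.prod_apply hA] at this
  rw [show {ω | y < X ω + Y ω} = (fun ω => (X ω, Y ω)) ⁻¹' {p | y < p.1 + p.2} from rfl, ← this]
  refine lintegral_congr fun t => ?_
  rw [Measure.map_apply hY (measurable_prodMk_left hA)]
  congr 1
  ext ω
  simp [sub_lt_iff_lt_add']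

theorem measure_lt_sum_range_eq_erlangTail (hmeas : ∀ i, Measurable (T i))
    (hindep : iIndepFun T P) (hdist : ∀ i, P.map (T i) = expMeasure 1) (n : ℕ) {y : ℝ}
    (hy : 0 ≤ y) :
    P {ω | y < ∑ i ∈ range n, T i ω} = ENNReal.ofReal (erlangTail n y) := by
  induction n generalizing y with
  | zero => simp [erlangTail, not_lt.2 hy]
  | succ n ih =>
    set S : Ω → ℝ := fun ω => ∑ i ∈ range n, T i ω
    have hS : Measurable S := Finset.measurable_sum _ fun i _ => hmeas i
    have hTS : IndepFun (T n) S P := by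
      have hsum : ∑ i ∈ range n, T i = S := by ext ω; simp [S]
      exact hsum ▸ (hindep.indepFun_finsetSum_of_notMem hmeas (notMem_range_self (n := n))).symm
    have hS_tail : ∀ a < 0, P {ω | a < S ω} = 1 := by
      intro a ha
      have hpos : ∀ᵐ ω ∂P, a < S ω := by
        filter_upwards [ae_all_iff.2 fun i => ae_nonneg_of_map_eq_expMeasure (hmeas i) (hdist i)]
          with ω hω
        exact ha.trans_le (sum_nonneg fun i _ => hω i)
      rw [(ae_iff_measure_eq (measurableSet_lt measurable_const hS).nullMeasurableSet).1 hpos,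
        measure_univ]
    calc P {ω | y < ∑ i ∈ range (n + 1), T i ω} = P {ω | y < T n ω + S ω} := by
          simp only [sum_range_succ, add_comm, S]
      _ = ∫⁻ t, P {ω | y - t < S ω} ∂expMeasure 1 := by
          rw [hTS.measure_lt_add (hmeas n) hS, hdist]
      _ = ENNReal.ofReal (exp (-(1 * y)) +
            ∫ t in (0 : ℝ)..y, 1 * exp (-(1 * t)) * erlangTail n (y - t)) :=
          lintegral_expMeasure_of_eq_one_of_lt one_pos hy (by fun_prop)
            (fun t ht => erlangTail_nonneg n (by linarith [ht.2]))
            (fun t ht => ih (by linarith [ht.2])) (fun t ht => hS_tail _ (by linarith))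
      _ = ENNReal.ofReal (erlangTail (n + 1) y) := by simp [erlangTail_succ]

end Erlang

theorem stmt_0_general {Ω : Type*} [MeasurableSpace Ω] (P : Measure Ω) [IsProbabilityMeasure P]
    (T : ℕ → Ω → ℝ) (hmeas : ∀ i, Measurable (T i))
    (hindep : iIndepFun T P)
    (hdist : ∀ i, P.map (T i) = expMeasure 1)
    (c x₀ : ℝ) (hc : 0 < c) (n : ℕ) (hn : 1 ≤ n) :
    ENNReal.ofReal (1 - ∑ k ∈ Finset.range n,
        (max (((n : ℝ) - x₀) / c) 0) ^ k / (Nat.factorial k)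
          * Real.exp (-(max (((n : ℝ) - x₀) / c) 0)))
      ≤ P {ω | ∃ k, 1 ≤ k ∧ k ≤ n ∧ CLskeleton T c x₀ k ω ≤ 0} := by
  set v := ((n : ℝ) - x₀) / c
  change ENNReal.ofReal (1 - erlangTail n (max v 0)) ≤ _
  rcases le_total v 0 with hv | hv
  · rw [max_eq_right hv, erlangTail_zero_right (by omega), sub_self, ENNReal.ofReal_zero]
    exact zero_le
  have hS : MeasurableSet {ω | v < ∑ i ∈ range n, T i ω} :=
    measurableSet_lt measurable_const (Finset.measurable_sum _ fun i _ => hmeas i)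
  calc ENNReal.ofReal (1 - erlangTail n (max v 0)) = P {ω | v < ∑ i ∈ range n, T i ω}ᶜ := by
        rw [max_eq_left hv, prob_compl_eq_one_sub hS,
          measure_lt_sum_range_eq_erlangTail hmeas hindep hdist n hv,
          ENNReal.ofReal_sub _ (erlangTail_nonneg n hv), ENNReal.ofReal_one]
    _ ≤ P {ω | ∃ k, 1 ≤ k ∧ k ≤ n ∧ CLskeleton T c x₀ k ω ≤ 0} := measure_mono fun ω hω =>
        ⟨n, hn, le_rfl, (CLskeleton_nonpos_iff T hc x₀ n ω).2 (not_lt.1 hω)⟩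

/-- lower bound on the probability of confirmation within `n` blocks. -/
theorem stmt_0 {Ω : Type*} [MeasurableSpace Ω] (P : Measure Ω) [IsProbabilityMeasure P]
    (T : ℕ → Ω → ℝ) (hmeas : ∀ i, Measurable (T i))
    (hindep : iIndepFun T P)
    (hdist : ∀ i, P.map (T i) = expMeasure 1)
    (c x₀ : ℝ) (hc : 0 < c) (hx₀ : 0 ≤ x₀) (n : ℕ) (hn : 1 ≤ n) :
    ENNReal.ofReal (1 - ∑ k ∈ Finset.range n,
        (max (((n : ℝ) - x₀) / c) 0) ^ k / (Nat.factorial k)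
          * Real.exp (-(max (((n : ℝ) - x₀) / c) 0)))
      ≤ P {ω | ∃ k, 1 ≤ k ∧ k ≤ n ∧ CLskeleton T c x₀ k ω ≤ 0} :=
  stmt_0_general P T hmeas hindep hdist c x₀ hc n hn
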